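/- arXiv:1809.03814 — 3 statements merged into one kernel-verified Lean document; each statement's English description precedes it below -/
import Mathlib

section
/- Applying a single decoding rule to an encoded string graph yields an encoded string graph with strictly fewer encoding edges. -/
/-- Vertex labels: node-vertex labels, wire-vertex labels, and nonterminal labels. -/
inductive VLab : Type
  | node : ℕ → VLab
  | wire : ℕ → VLab
  | nt : ℕ → VLab
  deriving DecidableEq

/-- Edge labels: plain (terminal) labels and encoding labels. -/
inductive ELab : Type
  | plain : ℕ → ELab
  | enc : ℕ → ELab
  deriving DecidableEq

def VLab.isNode : VLab → Bool | .node _ => true | _ => false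
def VLab.isWire : VLab → Bool | .wire _ => true | _ => false
def VLab.isNT : VLab → Bool | .nt _ => true | _ => false
def ELab.isEnc : ELab → Bool | .enc _ => true | _ => false

/-- A finite labelled directed graph with vertices drawn from ℕ. -/
structure LGraph : Type where
  V : Finset ℕ
  E : Finset (ℕ × ELab × ℕ)
  lab : ℕ → VLab

def inDeg (H : LGraph) (v : ℕ) : ℕ := (H.E.filter (fun e => e.2.2 = v)).card
def outDeg (H : LGraph) (v : ℕ) : ℕ := (H.E.filter (fun e => e.1 = v)).card

/-- Edges connect distinct vertices of the graph (no self-loops). -/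
def WellFormed (H : LGraph) : Prop := ∀ e ∈ H.E, e.1 ∈ H.V ∧ e.2.2 ∈ H.V ∧ e.1 ≠ e.2.2

/-- A string graph: wire-vertices have in/out-degree at most one, no encoding
edges, and node-vertices are adjacent only to wire-vertices. -/
def StringGraph (H : LGraph) : Prop :=
  WellFormed H ∧
  (∀ v ∈ H.V, (H.lab v).isNode = true ∨ (H.lab v).isWire = true) ∧
  (∀ v ∈ H.V, (H.lab v).isWire = true → inDeg H v ≤ 1 ∧ outDeg H v ≤ 1) ∧
  (∀ e ∈ H.E, e.2.1.isEnc = false) ∧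
  (∀ e ∈ H.E, ¬((H.lab e.1).isNode = true ∧ (H.lab e.2.2).isNode = true))

/-- An encoded string graph: like a string graph but encoding-labelled edges
between node-vertices are allowed. -/
def EncodedSG (H : LGraph) : Prop :=
  WellFormed H ∧
  (∀ v ∈ H.V, (H.lab v).isNode = true ∨ (H.lab v).isWire = true) ∧
  (∀ v ∈ H.V, (H.lab v).isWire = true → inDeg H v ≤ 1 ∧ outDeg H v ≤ 1) ∧
  (∀ e ∈ H.E, if e.2.1.isEnc = true
    then (H.lab e.1).isNode = true ∧ (H.lab e.2.2).isNode = true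
    else ¬((H.lab e.1).isNode = true ∧ (H.lab e.2.2).isNode = true))

/-- Number of encoding edges. -/
def encCount (H : LGraph) : ℕ := (H.E.filter (fun e => e.2.1.isEnc = true)).card

def isInput (H : LGraph) (v : ℕ) : Prop := (H.lab v).isWire = true ∧ inDeg H v = 0
def isOutput (H : LGraph) (v : ℕ) : Prop := (H.lab v).isWire = true ∧ outDeg H v = 0

/-- A decoding rule: a replacement fragment with two distinguished node-vertices. -/
structure DecRule : Type where
  F : LGraph
  src : ℕ
  tgt : ℕ

/-- A decoding system: one rule for every triple (encoding label, node label, node label). -/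
structure DecSystem : Type where
  rule : ℕ → ℕ → ℕ → DecRule

/-- The rule for (α,σ₁,σ₂) has as RHS a string graph on the two node-vertices with at
least one additional vertex and no inputs, outputs or encoding edges. -/
def ValidDecRule (R : DecRule) (s1 s2 : ℕ) : Prop :=
  R.src ∈ R.F.V ∧ R.tgt ∈ R.F.V ∧ R.src ≠ R.tgt ∧
  R.F.lab R.src = VLab.node s1 ∧ R.F.lab R.tgt = VLab.node s2 ∧
  StringGraph R.F ∧ 3 ≤ R.F.V.card ∧
  (∀ v ∈ R.F.V, (R.F.lab v).isNode = true → v = R.src ∨ v = R.tgt) ∧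
  (∀ v ∈ R.F.V, (R.F.lab v).isWire = true → inDeg R.F v = 1 ∧ outDeg R.F v = 1)

def ValidDecSystem (T : DecSystem) : Prop := ∀ a s1 s2, ValidDecRule (T.rule a s1 s2) s1 s2

/-- One DPO decoding step: remove one encoding edge and glue in a fresh copy of the
corresponding rule's right-hand side on its two endpoints. -/
def DecStep (T : DecSystem) (H H' : LGraph) : Prop :=
  ∃ u a w s1 s2, (u, ELab.enc a, w) ∈ H.E ∧
    H.lab u = VLab.node s1 ∧ H.lab w = VLab.node s2 ∧
    ∃ ρ : ℕ → ℕ,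
      Set.InjOn ρ ↑(T.rule a s1 s2).F.V ∧
      ρ (T.rule a s1 s2).src = u ∧ ρ (T.rule a s1 s2).tgt = w ∧
      (∀ x ∈ (T.rule a s1 s2).F.V, x ≠ (T.rule a s1 s2).src → x ≠ (T.rule a s1 s2).tgt →
        ρ x ∉ H.V) ∧
      H'.V = H.V ∪ (T.rule a s1 s2).F.V.image ρ ∧
      H'.E = (H.E.erase (u, ELab.enc a, w)) ∪
        (T.rule a s1 s2).F.E.image (fun e => (ρ e.1, e.2.1, ρ e.2.2)) ∧
      (∀ v ∈ H.V, H'.lab v = H.lab v) ∧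
      (∀ x ∈ (T.rule a s1 s2).F.V, H'.lab (ρ x) = (T.rule a s1 s2).F.lab x)

/-- Full decoding: exhaustive application of the decoding system. -/
def FullDecode (T : DecSystem) (H H' : LGraph) : Prop :=
  Relation.ReflTransGen (DecStep T) H H' ∧ encCount H' = 0

/-- LGraph isomorphism. -/
def GIso (H K : LGraph) : Prop :=
  ∃ f : ℕ → ℕ, Set.BijOn f ↑H.V ↑K.V ∧
    (∀ v ∈ H.V, K.lab (f v) = H.lab v) ∧
    (∀ u l w, u ∈ H.V → w ∈ H.V → ((u, l, w) ∈ H.E ↔ (f u, l, f w) ∈ K.E))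

/-!
A decoding step factors into two moves: deleting the chosen encoding edge, which clearly
preserves encoded string graphs and lowers the number of encoding edges by one, and gluing in
a copy of a string graph that meets the host only in node-vertices. The glued copy brings no
encoding edges, and since it touches no wire-vertex of the host and the host touches none of
its fresh vertices, every wire-vertex keeps the degrees it had in the graph it came from.
-/

theorem VLab.isNode_eq_false_of_isWire {l : VLab} (h : l.isWire = true) : l.isNode = false := by
  cases l <;> simp_all [VLab.isWire, VLab.isNode]

def mapEdge (ρ : ℕ → ℕ) (e : ℕ × ELab × ℕ) : ℕ × ELab × ℕ := (ρ e.1, e.2.1, ρ e.2.2)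

/-- Lets `inDeg` and `outDeg` be handled at once. -/
def IsEndpoint (π : ℕ × ELab × ℕ → ℕ) : Prop := π = (·.1) ∨ π = (·.2.2)

namespace IsEndpoint

variable {π : ℕ × ELab × ℕ → ℕ}

theorem map_mapEdge (hπ : IsEndpoint π) (ρ : ℕ → ℕ) (e : ℕ × ELab × ℕ) :
    π (mapEdge ρ e) = ρ (π e) := by
  rcases hπ with rfl | rfl <;> rfl

theorem mem_of_wellFormed (hπ : IsEndpoint π) {H : LGraph} (hH : WellFormed H)
    {e : ℕ × ELab × ℕ} (he : e ∈ H.E) : π e ∈ H.V := by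
  rcases hπ with rfl | rfl
  exacts [(hH e he).1, (hH e he).2.1]

end IsEndpoint

def LGraph.eraseEdge (H : LGraph) (d : ℕ × ELab × ℕ) : LGraph := { H with E := H.E.erase d }

section eraseEdge

variable (H : LGraph) (d : ℕ × ELab × ℕ)

@[simp] theorem LGraph.eraseEdge_V : (H.eraseEdge d).V = H.V := rfl
@[simp] theorem LGraph.eraseEdge_E : (H.eraseEdge d).E = H.E.erase d := rfl
@[simp] theorem LGraph.eraseEdge_lab : (H.eraseEdge d).lab = H.lab := rfl

theorem inDeg_eraseEdge_le (v : ℕ) : inDeg (H.eraseEdge d) v ≤ inDeg H v := by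
  simpa only [inDeg, LGraph.eraseEdge_E, Finset.filter_erase] using Finset.card_erase_le

theorem outDeg_eraseEdge_le (v : ℕ) : outDeg (H.eraseEdge d) v ≤ outDeg H v := by
  simpa only [outDeg, LGraph.eraseEdge_E, Finset.filter_erase] using Finset.card_erase_le

theorem EncodedSG.eraseEdge {H : LGraph} (hH : EncodedSG H) : EncodedSG (H.eraseEdge d) := by
  obtain ⟨hwf, hlab, hdeg, henc⟩ := hH
  refine ⟨fun e he => hwf e (Finset.mem_of_mem_erase he), hlab, fun v hv hwire => ?_,
    fun e he => henc e (Finset.mem_of_mem_erase he)⟩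
  exact ⟨(inDeg_eraseEdge_le H d v).trans (hdeg v hv hwire).1,
    (outDeg_eraseEdge_le H d v).trans (hdeg v hv hwire).2⟩

theorem encCount_eraseEdge_lt {H : LGraph} {d : ℕ × ELab × ℕ} (hd : d ∈ H.E)
    (henc : d.2.1.isEnc = true) : encCount (H.eraseEdge d) < encCount H := by
  simp only [encCount, LGraph.eraseEdge_E, Finset.filter_erase]
  exact Finset.card_erase_lt_of_mem (Finset.mem_filter.2 ⟨hd, henc⟩)

end eraseEdge

structure IsGluing (H F H' : LGraph) (ρ : ℕ → ℕ) : Prop where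
  injOn : Set.InjOn ρ F.V
  isNode_of_mem : ∀ x ∈ F.V, ρ x ∈ H.V → (H.lab (ρ x)).isNode = true
  V_eq : H'.V = H.V ∪ F.V.image ρ
  E_eq : H'.E = H.E ∪ F.E.image (mapEdge ρ)
  lab_of_mem : ∀ v ∈ H.V, H'.lab v = H.lab v
  lab_map : ∀ x ∈ F.V, H'.lab (ρ x) = F.lab x

namespace IsGluing

variable {H F H' : LGraph} {ρ : ℕ → ℕ} (hg : IsGluing H F H' ρ)
include hg

theorem mem_V {v : ℕ} (hv : v ∈ H'.V) : v ∈ H.V ∨ ∃ x ∈ F.V, ρ x = v ∧ ρ x ∉ H.V := by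
  rw [hg.V_eq, Finset.mem_union, Finset.mem_image] at hv
  rcases hv with hv | ⟨x, hx, rfl⟩
  · exact .inl hv
  · by_cases hxH : ρ x ∈ H.V
    exacts [.inl hxH, .inr ⟨x, hx, rfl, hxH⟩]

theorem mem_E {e : ℕ × ELab × ℕ} : e ∈ H'.E ↔ e ∈ H.E ∨ ∃ f ∈ F.E, mapEdge ρ f = e := by
  rw [hg.E_eq, Finset.mem_union, Finset.mem_image]

theorem wellFormed (hH : WellFormed H) (hF : WellFormed F) : WellFormed H' := by
  intro e he
  rw [hg.V_eq]
  rcases hg.mem_E.1 he with he | ⟨f, hf, rfl⟩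
  · obtain ⟨h1, h2, hne⟩ := hH e he
    exact ⟨Finset.mem_union_left _ h1, Finset.mem_union_left _ h2, hne⟩
  · obtain ⟨h1, h2, hne⟩ := hF f hf
    exact ⟨Finset.mem_union_right _ (Finset.mem_image_of_mem ρ h1),
      Finset.mem_union_right _ (Finset.mem_image_of_mem ρ h2), fun h => hne (hg.injOn h1 h2 h)⟩

variable {π : ℕ × ELab × ℕ → ℕ}

/-- Glued edges end in node-vertices of `H` or in fresh vertices, so they miss every other
vertex of `H`. -/
theorem card_filter_le_of_not_isNode (hF : WellFormed F) (hπ : IsEndpoint π) {v : ℕ}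
    (hv : v ∈ H.V) (hnode : (H.lab v).isNode = false) :
    (H'.E.filter (π · = v)).card ≤ (H.E.filter (π · = v)).card := by
  refine Finset.card_le_card fun e he => ?_
  rw [Finset.mem_filter, hg.mem_E] at he
  rcases he with ⟨he | ⟨f, hf, rfl⟩, hev⟩
  · exact Finset.mem_filter.2 ⟨he, hev⟩
  · rw [hπ.map_mapEdge] at hev
    have := hg.isNode_of_mem _ (hπ.mem_of_wellFormed hF hf) (hev ▸ hv)
    rw [hev, hnode] at this
    exact absurd this Bool.false_ne_true

theorem card_filter_map_le (hH : WellFormed H) (hF : WellFormed F) (hπ : IsEndpoint π)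
    {x : ℕ} (hx : x ∈ F.V) (hxH : ρ x ∉ H.V) :
    (H'.E.filter (π · = ρ x)).card ≤ (F.E.filter (π · = x)).card := by
  calc (H'.E.filter (π · = ρ x)).card
      ≤ ((F.E.filter (π · = x)).image (mapEdge ρ)).card := by
        refine Finset.card_le_card fun e he => ?_
        rw [Finset.mem_filter, hg.mem_E] at he
        rcases he with ⟨he | ⟨f, hf, rfl⟩, hex⟩
        · exact absurd (hex ▸ hπ.mem_of_wellFormed hH he) hxH
        · rw [hπ.map_mapEdge] at hex
          exact Finset.mem_image_of_mem _
            (Finset.mem_filter.2 ⟨hf, hg.injOn (hπ.mem_of_wellFormed hF hf) hx hex⟩)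
    _ ≤ (F.E.filter (π · = x)).card := Finset.card_image_le

theorem encodedSG (hH : EncodedSG H) (hF : StringGraph F) : EncodedSG H' := by
  obtain ⟨hHwf, hHlab, hHdeg, hHenc⟩ := hH
  obtain ⟨hFwf, hFlab, hFdeg, hFenc, hFnn⟩ := hF
  refine ⟨hg.wellFormed hHwf hFwf, fun v hv => ?_, fun v hv hwire => ?_, fun e he => ?_⟩
  · rcases hg.mem_V hv with hv | ⟨x, hx, rfl, -⟩
    · rw [hg.lab_of_mem v hv]; exact hHlab v hv
    · rw [hg.lab_map x hx]; exact hFlab x hx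
  · rcases hg.mem_V hv with hv | ⟨x, hx, rfl, hxH⟩
    · rw [hg.lab_of_mem v hv] at hwire
      have hnode := VLab.isNode_eq_false_of_isWire hwire
      exact ⟨(hg.card_filter_le_of_not_isNode hFwf (.inr rfl) hv hnode).trans
          (hHdeg v hv hwire).1,
        (hg.card_filter_le_of_not_isNode hFwf (.inl rfl) hv hnode).trans (hHdeg v hv hwire).2⟩
    · rw [hg.lab_map x hx] at hwire
      exact ⟨(hg.card_filter_map_le hHwf hFwf (.inr rfl) hx hxH).trans (hFdeg x hx hwire).1,
        (hg.card_filter_map_le hHwf hFwf (.inl rfl) hx hxH).trans (hFdeg x hx hwire).2⟩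
  · rcases hg.mem_E.1 he with he | ⟨f, hf, rfl⟩
    · rw [hg.lab_of_mem _ (hHwf e he).1, hg.lab_of_mem _ (hHwf e he).2.1]
      exact hHenc e he
    · simp only [mapEdge, hFenc f hf, hg.lab_map _ (hFwf f hf).1, hg.lab_map _ (hFwf f hf).2.1,
        Bool.false_eq_true, if_false]
      exact hFnn f hf

theorem encCount_eq (hF : ∀ f ∈ F.E, f.2.1.isEnc = false) : encCount H' = encCount H := by
  have hnew : (F.E.image (mapEdge ρ)).filter (fun e => e.2.1.isEnc = true) = ∅ := by
    simp only [Finset.filter_eq_empty_iff, Finset.mem_image]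
    rintro _ ⟨f, hf, rfl⟩
    simp [mapEdge, hF f hf]
  rw [encCount, hg.E_eq, Finset.filter_union, hnew, Finset.union_empty, encCount]

end IsGluing

theorem DecStep.exists_isGluing {T : DecSystem} {H H' : LGraph} (h : DecStep T H H') :
    ∃ d ∈ H.E, d.2.1.isEnc = true ∧
      ∃ a s1 s2 ρ, IsGluing (H.eraseEdge d) (T.rule a s1 s2).F H' ρ := by
  obtain ⟨u, a, w, s1, s2, hd, hu, hw, ρ, hinj, hsrc, htgt, hfresh, hV, hE, hlabH, hlabF⟩ := h
  refine ⟨_, hd, rfl, a, s1, s2, ρ, hinj, fun x hx hxH => ?_, hV, hE, hlabH, hlabF⟩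
  by_cases hxs : x = (T.rule a s1 s2).src
  · simp [hxs, hsrc, hu, VLab.isNode]
  by_cases hxt : x = (T.rule a s1 s2).tgt
  · simp [hxt, htgt, hw, VLab.isNode]
  exact absurd hxH (hfresh x hx hxs hxt)

/-- A single decoding step on an encoded string graph yields an
encoded string graph with strictly fewer encoding edges. -/
theorem decoding_step_decreases_encoding_edges (T : DecSystem) (hT : ValidDecSystem T)
    (H H' : LGraph) (hH : EncodedSG H) (hstep : DecStep T H H') :
    EncodedSG H' ∧ encCount H' < encCount H := by
  obtain ⟨d, hd, henc, a, s1, s2, ρ, hg⟩ := hstep.exists_isGluing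
  have hF : StringGraph (T.rule a s1 s2).F := (hT a s1 s2).2.2.2.2.2.1
  exact ⟨hg.encodedSG (hH.eraseEdge d) hF,
    hg.encCount_eq hF.2.2.2.1 ▸ encCount_eraseEdge_lt hd henc⟩
end

section
/- The language of the star grammar from the paper equals the family {sS_n : n ∈ ℕ, n ≥ 1} of star string graphs: the grammar with productions S → (central node-vertex c with one attached wire-vertex, plus nonterminal X connected to c) and X → (wire-vertex w adjacent to a fresh node-vertex u which has one attached open wire-vertex, with connection instructions attaching w to c, plus a recursive nonterminal) / X → (same without the nonterminal) generates exactly the graphs with one central node-vertex connected via single-wire-vertex wires to n peripheral node-vertices, each vertex having one open-ended wire. -/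
/-- An extended graph: a graph together with a connection relation
C ⊆ Σ × Γ × Γ × V × {in,out} (here Bool, `true` = in). -/
structure ExtGraph extends LGraph where
  C : Finset (VLab × ELab × ELab × ℕ × Bool)

/-- Well-formedness of an extended graph. -/
def WFE (H : ExtGraph) : Prop :=
  (∀ e ∈ H.E, e.1 ∈ H.V ∧ e.2.2 ∈ H.V ∧ e.1 ≠ e.2.2) ∧ (∀ c ∈ H.C, c.2.2.2.1 ∈ H.V)

/-- Extended graph homomorphism: preserves vertices, labels, edges and
connection instructions. -/
def ExtHom (f : ℕ → ℕ) (H K : ExtGraph) : Prop :=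
  (∀ v ∈ H.V, f v ∈ K.V) ∧
  (∀ v ∈ H.V, K.lab (f v) = H.lab v) ∧
  (∀ e ∈ H.E, (f e.1, e.2.1, f e.2.2) ∈ K.E) ∧
  (∀ c ∈ H.C, (c.1, c.2.1, c.2.2.1, f c.2.2.2.1, c.2.2.2.2) ∈ K.C)

/-- Extended graph isomorphism. -/
def ExtIso (H K : ExtGraph) : Prop :=
  ∃ f : ℕ → ℕ, Set.BijOn f ↑H.V ↑K.V ∧
    (∀ v ∈ H.V, K.lab (f v) = H.lab v) ∧
    (∀ u l w, u ∈ H.V → w ∈ H.V → ((u, l, w) ∈ H.E ↔ (f u, l, f w) ∈ K.E)) ∧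
    (∀ σ β γ x d, x ∈ H.V → ((σ, β, γ, x, d) ∈ H.C ↔ (σ, β, γ, f x, d) ∈ K.C))

/-- Bridge edges established by "in" connection instructions of `D` when
substituting `D` for vertex `v` of `H`: for (σ,β,γ,x,in) ∈ C_D and a σ-labelled
vertex w of H with a β-labelled edge into v, add a γ-labelled edge from w to x. -/
def bridgeIn (H : ExtGraph) (v : ℕ) (D : ExtGraph) : Finset (ℕ × ELab × ℕ) :=
  ((D.C ×ˢ H.E).filter (fun q =>
      q.1.2.2.2.2 = true ∧ q.2.2.2 = v ∧ q.2.2.1 = q.1.2.1 ∧ H.lab q.2.1 = q.1.1)).image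
    (fun q => (q.2.1, q.1.2.2.1, q.1.2.2.2.1))

/-- Bridge edges established by "out" connection instructions of `D`. -/
def bridgeOut (H : ExtGraph) (v : ℕ) (D : ExtGraph) : Finset (ℕ × ELab × ℕ) :=
  ((D.C ×ˢ H.E).filter (fun q =>
      q.1.2.2.2.2 = false ∧ q.2.1 = v ∧ q.2.2.1 = q.1.2.1 ∧ H.lab q.2.2.2 = q.1.1)).image
    (fun q => (q.1.2.2.2.1, q.1.2.2.1, q.2.2.2))

/-- Connection relation of the substitution: instructions of H not pointing at v,
together with compositions of instructions of H pointing at v with instructions of D. -/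
def substC (H : ExtGraph) (v : ℕ) (D : ExtGraph) : Finset (VLab × ELab × ELab × ℕ × Bool) :=
  H.C.filter (fun c => c.2.2.2.1 ≠ v) ∪
  ((H.C ×ˢ D.C).filter (fun q =>
      q.1.2.2.2.1 = v ∧ q.2.1 = q.1.1 ∧ q.2.2.1 = q.1.2.2.1 ∧ q.2.2.2.2.2 = q.1.2.2.2.2)).image
    (fun q => (q.1.1, q.1.2.1, q.2.2.2.1, q.2.2.2.2.1, q.1.2.2.2.2))

/-- Substitution of the extended graph `D` for vertex `v` in `H`. -/
def subst (H : ExtGraph) (v : ℕ) (D : ExtGraph) : ExtGraph where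
  V := H.V.erase v ∪ D.V
  E := H.E.filter (fun e => e.1 ≠ v ∧ e.2.2 ≠ v) ∪ D.E ∪ bridgeIn H v D ∪ bridgeOut H v D
  lab := fun x => if x ∈ D.V then D.lab x else H.lab x
  C := substC H v D

/-- An edNCE grammar: an (index set of) productions X → (D,C) and an initial
nonterminal label. -/
structure Grammar where
  ι : Type
  lhs : ι → ℕ
  rhs : ι → ExtGraph
  S : ℕ

/-- The initial extended graph: a single vertex `z` labelled by the nonterminal `s`. -/
def sn (s z : ℕ) : ExtGraph := ⟨⟨{z}, ∅, fun _ => VLab.nt s⟩, ∅⟩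

/-- A derivation step replacing the nonterminal vertex `v` using production `p`
(applied via a fresh isomorphic copy `D` of its right-hand side). -/
def DerStepAt (G : Grammar) (v : ℕ) (p : G.ι) (H H' : ExtGraph) : Prop :=
  v ∈ H.V ∧ H.lab v = VLab.nt (G.lhs p) ∧
  ∃ D : ExtGraph, WFE D ∧ ExtIso D (G.rhs p) ∧ (∀ x ∈ D.V, x ∉ H.V) ∧ H' = subst H v D

def DerStep (G : Grammar) (H H' : ExtGraph) : Prop := ∃ v p, DerStepAt G v p H H'

/-- A terminal (extended) graph: no nonterminal vertices. -/
def Terminal (H : ExtGraph) : Prop := ∀ v ∈ H.V, (H.lab v).isNT = false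

/-- Star grammar, S-production: central node-vertex c (0) with pendant
wire-vertex (1) and nonterminal X (2), with an edge from c into X. -/
def SDS : ExtGraph :=
  ⟨⟨{0, 1, 2}, {(0, ELab.plain 0, 1), (0, ELab.plain 0, 2)},
    fun x => if x = 0 then VLab.node 0 else if x = 1 then VLab.wire 0 else VLab.nt 1⟩, ∅⟩

/-- Star grammar, recursive X-production: a wire-vertex w (0) adjacent to a fresh
node-vertex u (1) with its pendant wire-vertex (2), plus a recursive nonterminal
X (3); connection instructions attach w and the new X to the centre c. -/
def SXrec : ExtGraph :=
  ⟨⟨{0, 1, 2, 3}, {(0, ELab.plain 0, 1), (1, ELab.plain 0, 2)},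
    fun x => if x = 0 then VLab.wire 0 else if x = 1 then VLab.node 0
             else if x = 2 then VLab.wire 0 else VLab.nt 1⟩,
   {(VLab.node 0, ELab.plain 0, ELab.plain 0, 0, true),
    (VLab.node 0, ELab.plain 0, ELab.plain 0, 3, true)}⟩

/-- Star grammar, terminating X-production: same as the recursive one but
without the nonterminal. -/
def SXterm : ExtGraph :=
  ⟨⟨{0, 1, 2}, {(0, ELab.plain 0, 1), (1, ELab.plain 0, 2)},
    fun x => if x = 0 then VLab.wire 0 else if x = 1 then VLab.node 0 else VLab.wire 0⟩,
   {(VLab.node 0, ELab.plain 0, ELab.plain 0, 0, true)}⟩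

/-- The star grammar. -/
def SGram : Grammar :=
  ⟨Fin 3, fun p => if p = 0 then 0 else 1,
   fun p => if p = 0 then SDS else if p = 1 then SXrec else SXterm, 0⟩

/-- The star string graph sS_n: a central node-vertex (0) with pendant
wire-vertex (1), and for each i < n a peripheral node-vertex (2+3i) with pendant
wire-vertex (3+3i), joined to the centre through the wire-vertex (4+3i). -/
def sSn (n : ℕ) : LGraph :=
  ⟨{0, 1} ∪ (Finset.range n).image (fun i => 2 + 3 * i) ∪
     (Finset.range n).image (fun i => 3 + 3 * i) ∪
     (Finset.range n).image (fun i => 4 + 3 * i),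
   {((0 : ℕ), ELab.plain 0, (1 : ℕ))} ∪
     (Finset.range n).image (fun i => ((0 : ℕ), ELab.plain 0, 4 + 3 * i)) ∪
     (Finset.range n).image (fun i => (4 + 3 * i, ELab.plain 0, 2 + 3 * i)) ∪
     (Finset.range n).image (fun i => (2 + 3 * i, ELab.plain 0, 3 + 3 * i)),
   fun x => if x = 0 then VLab.node 0 else if x = 1 then VLab.wire 0
            else if (x - 2) % 3 = 0 then VLab.node 0 else VLab.wire 0⟩

/-! Up to renaming of vertices, every sentential form of the star grammar is the start graph,
`openStar n` (that is, `sS_n` with a nonterminal hanging off the centre), or `sS_n` itself. Since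
edNCE substitution commutes with renaming, each derivation step can be computed once on these
representatives: the `S`-production turns the start graph into `openStar 0`, and the two
`X`-productions turn `openStar n` into `openStar (n + 1)` and `sS_(n+1)` respectively. Conversely,
fresh copies of the right-hand sides realise each of these steps in an actual derivation. -/

def mapE (f : ℕ → ℕ) (e : ℕ × ELab × ℕ) : ℕ × ELab × ℕ := (f e.1, e.2.1, f e.2.2)

def mapC (f : ℕ → ℕ) (c : VLab × ELab × ELab × ℕ × Bool) : VLab × ELab × ELab × ℕ × Bool :=
  (c.1, c.2.1, c.2.2.1, f c.2.2.2.1, c.2.2.2.2)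

structure IsRenaming (f : ℕ → ℕ) (K H : ExtGraph) : Prop where
  injOn : Set.InjOn f K.V
  V_eq : H.V = K.V.image f
  E_eq : H.E = K.E.image (mapE f)
  C_eq : H.C = K.C.image (mapC f)
  lab_eq : ∀ x ∈ K.V, H.lab (f x) = K.lab x

lemma Finset.image_eq_self_of_forall {α : Type*} [DecidableEq α] {s : Finset α} {g : α → α}
    (h : ∀ x ∈ s, g x = x) : s.image g = s := by
  rw [Finset.image_congr (g := id) h, Finset.image_id]

namespace IsRenaming

variable {f g : ℕ → ℕ} {K H L : ExtGraph}

lemma mem_V (h : IsRenaming f K H) {x : ℕ} (hx : x ∈ K.V) : f x ∈ H.V :=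
  h.V_eq ▸ Finset.mem_image_of_mem f hx

lemma exists_of_mem_V (h : IsRenaming f K H) {y : ℕ} (hy : y ∈ H.V) : ∃ x ∈ K.V, f x = y :=
  Finset.mem_image.1 (h.V_eq ▸ hy)

lemma wfe (h : IsRenaming f K H) (hK : WFE K) : WFE H := by
  refine ⟨fun e he => ?_, fun c hc => ?_⟩
  · rw [h.E_eq] at he
    obtain ⟨e₀, he₀, rfl⟩ := Finset.mem_image.1 he
    obtain ⟨h1, h2, hne⟩ := hK.1 e₀ he₀
    exact ⟨h.mem_V h1, h.mem_V h2, fun heq => hne (h.injOn h1 h2 heq)⟩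
  · rw [h.C_eq] at hc
    obtain ⟨c₀, hc₀, rfl⟩ := Finset.mem_image.1 hc
    exact h.mem_V (hK.2 c₀ hc₀)

lemma comp (hf : IsRenaming f K H) (hg : IsRenaming g H L) : IsRenaming (g ∘ f) K L where
  injOn := hg.injOn.comp hf.injOn fun x hx => hf.mem_V hx
  V_eq := by rw [hg.V_eq, hf.V_eq, Finset.image_image]
  E_eq := by rw [hg.E_eq, hf.E_eq, Finset.image_image]; rfl
  C_eq := by rw [hg.C_eq, hf.C_eq, Finset.image_image]; rfl
  lab_eq x hx := (hg.lab_eq _ (hf.mem_V hx)).trans (hf.lab_eq x hx)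

lemma symm (h : IsRenaming f K H) (hK : WFE K) : IsRenaming (Function.invFunOn f K.V) H K := by
  set g := Function.invFunOn f K.V
  have hgf : ∀ x ∈ K.V, g (f x) = x := fun x hx => h.injOn.leftInvOn_invFunOn hx
  have hbij : Set.BijOn f K.V H.V := by
    rw [h.V_eq, Finset.coe_image]; exact h.injOn.bijOn_image
  refine ⟨(Set.BijOn.symm hbij.invOn_invFunOn.symm hbij).injOn, ?_, ?_, ?_, ?_⟩
  · rw [h.V_eq, Finset.image_image]; exact (Finset.image_eq_self_of_forall hgf).symm
  · rw [h.E_eq, Finset.image_image, Finset.image_eq_self_of_forall]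
    intro e he
    simp only [Function.comp, mapE, hgf _ (hK.1 e he).1, hgf _ (hK.1 e he).2.1]
  · rw [h.C_eq, Finset.image_image, Finset.image_eq_self_of_forall]
    intro c hc
    simp only [Function.comp, mapC, hgf _ (hK.2 c hc)]
  · intro y hy
    obtain ⟨x, hx, rfl⟩ := h.exists_of_mem_V hy
    rw [hgf x hx, h.lab_eq x hx]

lemma extIso (h : IsRenaming f K H) (hK : WFE K) : ExtIso K H := by
  refine ⟨f, ?_, fun x hx => h.lab_eq x hx, fun u l w hu hw => ?_, fun σ β γ x d hx => ?_⟩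
  · rw [h.V_eq, Finset.coe_image]; exact h.injOn.bijOn_image
  · rw [h.E_eq, Finset.mem_image]
    refine ⟨fun he => ⟨_, he, rfl⟩, ?_⟩
    rintro ⟨⟨a, l', b⟩, he, heq⟩
    simp only [mapE, Prod.mk.injEq] at heq
    obtain ⟨ha, hb, -⟩ := hK.1 _ he
    rwa [← h.injOn ha hu heq.1, ← h.injOn hb hw heq.2.2, ← heq.2.1]
  · rw [h.C_eq, Finset.mem_image]
    refine ⟨fun hc => ⟨_, hc, rfl⟩, ?_⟩
    rintro ⟨⟨σ', β', γ', y, d'⟩, hc, heq⟩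
    simp only [mapC, Prod.mk.injEq] at heq
    obtain ⟨rfl, rfl, rfl, hxy, rfl⟩ := heq
    rwa [← h.injOn (hK.2 _ hc) hx hxy]

lemma gIso (h : IsRenaming f K H) (hK : WFE K) : GIso H.toLGraph K.toLGraph :=
  let ⟨g, hbij, hlab, hE, _⟩ := (h.symm hK).extIso (h.wfe hK)
  ⟨g, hbij, hlab, hE⟩

lemma of_eq (hV : H.V = K.V) (hE : H.E = K.E) (hC : H.C = K.C)
    (hlab : ∀ x ∈ K.V, H.lab x = K.lab x) : IsRenaming id K H where
  injOn := Set.injOn_id _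
  V_eq := by rw [hV, Finset.image_id]
  E_eq := by rw [hE]; exact (Finset.image_eq_self_of_forall fun _ _ => rfl).symm
  C_eq := by rw [hC]; exact (Finset.image_eq_self_of_forall fun _ _ => rfl).symm
  lab_eq := hlab

lemma refl (K : ExtGraph) : IsRenaming id K K := of_eq rfl rfl rfl fun _ _ => rfl

end IsRenaming

lemma ExtIso.isRenaming {D R : ExtGraph} (hD : WFE D) (hR : WFE R) (h : ExtIso D R) :
    ∃ f, IsRenaming f D R := by
  obtain ⟨f, hbij, hlab, hE, hC⟩ := h
  refine ⟨f, hbij.injOn, ?_, ?_, ?_, hlab⟩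
  · rw [← Finset.coe_inj, Finset.coe_image, hbij.image_eq]
  · ext ⟨u', l, w'⟩
    refine ⟨fun he => ?_, ?_⟩
    · obtain ⟨hu', hw', -⟩ : u' ∈ R.V ∧ w' ∈ R.V ∧ _ := hR.1 _ he
      obtain ⟨u, hu, rfl⟩ := hbij.surjOn hu'
      obtain ⟨w, hw, rfl⟩ := hbij.surjOn hw'
      exact Finset.mem_image.2 ⟨(u, l, w), (hE u l w hu hw).2 he, rfl⟩
    · rw [Finset.mem_image]
      rintro ⟨e, he, heq⟩
      rw [← heq]
      exact (hE _ _ _ (hD.1 e he).1 (hD.1 e he).2.1).1 he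
  · ext ⟨σ, β, γ, x', d⟩
    refine ⟨fun hc => ?_, ?_⟩
    · obtain ⟨x, hx, rfl⟩ := hbij.surjOn (hR.2 _ hc)
      exact Finset.mem_image.2 ⟨(σ, β, γ, x, d), (hC σ β γ x d hx).2 hc, rfl⟩
    · rw [Finset.mem_image]
      rintro ⟨c, hc, heq⟩
      rw [← heq]
      exact (hC _ _ _ _ _ (hD.2 c hc)).1 hc

/-- `τ` should undo `σ` on `R.V`; it is only used to read off labels. -/
def ExtGraph.rename (R : ExtGraph) (σ τ : ℕ → ℕ) : ExtGraph :=
  ⟨⟨R.V.image σ, R.E.image (mapE σ), R.lab ∘ τ⟩, R.C.image (mapC σ)⟩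

lemma isRenaming_rename {R : ExtGraph} {σ τ : ℕ → ℕ} (h : ∀ x ∈ R.V, τ (σ x) = x) :
    IsRenaming σ R (R.rename σ τ) where
  injOn := Set.LeftInvOn.injOn h
  V_eq := rfl
  E_eq := rfl
  C_eq := rfl
  lab_eq x hx := congrArg R.lab (h x hx)

lemma exists_fresh_renaming (R : ExtGraph) (S : Finset ℕ) :
    ∃ g D, IsRenaming g R D ∧ ∀ y ∈ D.V, y ∉ S := by
  refine ⟨(· + (S.sup id + 1)), _, isRenaming_rename (τ := (· - (S.sup id + 1)))
    fun x _ => Nat.add_sub_cancel x _, fun y hy hyS => ?_⟩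
  obtain ⟨x, -, rfl⟩ := Finset.mem_image.1 hy
  have := Finset.le_sup (f := id) hyS
  simp only [id] at this
  omega

lemma mem_bridgeIn {H D : ExtGraph} {v : ℕ} {e : ℕ × ELab × ℕ} :
    e ∈ bridgeIn H v D ↔ ∃ c ∈ D.C, ∃ w, c.2.2.2.2 = true ∧ (w, c.2.1, v) ∈ H.E ∧
      H.lab w = c.1 ∧ e = (w, c.2.2.1, c.2.2.2.1) := by
  simp only [bridgeIn, Finset.mem_image, Finset.mem_filter, Finset.mem_product]
  constructor
  · rintro ⟨⟨c, w, β, v'⟩, ⟨⟨hc, he⟩, hd, rfl, hβ, hl⟩, rfl⟩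
    dsimp only at hβ
    subst hβ
    exact ⟨c, hc, w, hd, he, hl, rfl⟩
  · rintro ⟨c, hc, w, hd, he, hl, rfl⟩
    exact ⟨⟨c, w, c.2.1, v⟩, ⟨⟨hc, he⟩, hd, rfl, rfl, hl⟩, rfl⟩

lemma mem_bridgeOut {H D : ExtGraph} {v : ℕ} {e : ℕ × ELab × ℕ} :
    e ∈ bridgeOut H v D ↔ ∃ c ∈ D.C, ∃ w, c.2.2.2.2 = false ∧ (v, c.2.1, w) ∈ H.E ∧
      H.lab w = c.1 ∧ e = (c.2.2.2.1, c.2.2.1, w) := by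
  simp only [bridgeOut, Finset.mem_image, Finset.mem_filter, Finset.mem_product]
  constructor
  · rintro ⟨⟨c, v', β, w⟩, ⟨⟨hc, he⟩, hd, rfl, hβ, hl⟩, rfl⟩
    dsimp only at hβ
    subst hβ
    exact ⟨c, hc, w, hd, he, hl, rfl⟩
  · rintro ⟨c, hc, w, hd, he, hl, rfl⟩
    exact ⟨⟨c, v, c.2.1, w⟩, ⟨⟨hc, he⟩, hd, rfl, rfl, hl⟩, rfl⟩

lemma mem_substC {H D : ExtGraph} {v : ℕ} {c : VLab × ELab × ELab × ℕ × Bool} :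
    c ∈ substC H v D ↔ (c ∈ H.C ∧ c.2.2.2.1 ≠ v) ∨
      ∃ a ∈ H.C, ∃ b ∈ D.C, a.2.2.2.1 = v ∧ b.1 = a.1 ∧ b.2.1 = a.2.2.1 ∧
        b.2.2.2.2 = a.2.2.2.2 ∧ c = (a.1, a.2.1, b.2.2.1, b.2.2.2.1, a.2.2.2.2) := by
  simp only [substC, Finset.mem_union, Finset.mem_filter, Finset.mem_image, Finset.mem_product]
  refine or_congr Iff.rfl ⟨?_, ?_⟩
  · rintro ⟨⟨a, b⟩, ⟨⟨ha, hb⟩, h1, h2, h3, h4⟩, rfl⟩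
    exact ⟨a, ha, b, hb, h1, h2, h3, h4, rfl⟩
  · rintro ⟨a, ha, b, hb, h1, h2, h3, h4, rfl⟩
    exact ⟨⟨a, b⟩, ⟨⟨ha, hb⟩, h1, h2, h3, h4⟩, rfl⟩

section Naturality

variable {f g : ℕ → ℕ} {K R H D : ExtGraph} {x₀ : ℕ}

lemma piecewise_eq_right_of_mem (hdisj : Disjoint (K.V.erase x₀) R.V) {x : ℕ} (hx : x ∈ K.V)
    (hne : x ≠ x₀) : R.V.piecewise g f x = f x :=
  Finset.piecewise_eq_of_notMem _ _ _
    (Finset.disjoint_left.1 hdisj (Finset.mem_erase.2 ⟨hne, hx⟩))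

/-- As `K` has no self-loops, the sources of edges into `x₀` lie in `K.V.erase x₀`, where the
renaming is `f`. -/
lemma IsRenaming.bridgeIn_eq (hK : WFE K) (hR : WFE R) (hf : IsRenaming f K H)
    (hg : IsRenaming g R D) (hx₀ : x₀ ∈ K.V) (hdisj : Disjoint (K.V.erase x₀) R.V) :
    bridgeIn H (f x₀) D = (bridgeIn K x₀ R).image (mapE (R.V.piecewise g f)) := by
  ext e
  rw [mem_bridgeIn, Finset.mem_image]
  constructor
  · rintro ⟨c, hc, w, hd, hw, hl, rfl⟩
    rw [hg.C_eq, Finset.mem_image] at hc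
    obtain ⟨c, hc, rfl⟩ := hc
    rw [hf.E_eq, Finset.mem_image] at hw
    obtain ⟨⟨a, β, b⟩, he, heq⟩ := hw
    simp only [mapE, mapC, Prod.mk.injEq] at heq hd hl ⊢
    obtain ⟨rfl, rfl, hb⟩ := heq
    obtain ⟨ha, hbK, hab⟩ := hK.1 _ he
    obtain rfl := hf.injOn hbK hx₀ hb
    refine ⟨(a, c.2.2.1, c.2.2.2.1), mem_bridgeIn.2 ⟨c, hc, a, hd, he, ?_, rfl⟩, ?_⟩
    · rw [← hl, hf.lab_eq a ha]
    · simp only [piecewise_eq_right_of_mem hdisj ha hab,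
        Finset.piecewise_eq_of_mem _ _ _ (hR.2 c hc), and_self]
  · rintro ⟨e, he, rfl⟩
    obtain ⟨c, hc, a, hd, ha, hl, rfl⟩ := mem_bridgeIn.1 he
    obtain ⟨haK, -, hax⟩ := hK.1 _ ha
    refine ⟨mapC g c, hg.C_eq ▸ Finset.mem_image_of_mem _ hc, f a, hd,
      hf.E_eq ▸ Finset.mem_image_of_mem (mapE f) ha, by rw [hf.lab_eq a haK, hl]; rfl, ?_⟩
    simp only [mapE, mapC, piecewise_eq_right_of_mem hdisj haK hax,
      Finset.piecewise_eq_of_mem _ _ _ (hR.2 c hc)]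

lemma IsRenaming.bridgeOut_eq (hK : WFE K) (hR : WFE R) (hf : IsRenaming f K H)
    (hg : IsRenaming g R D) (hx₀ : x₀ ∈ K.V) (hdisj : Disjoint (K.V.erase x₀) R.V) :
    bridgeOut H (f x₀) D = (bridgeOut K x₀ R).image (mapE (R.V.piecewise g f)) := by
  ext e
  rw [mem_bridgeOut, Finset.mem_image]
  constructor
  · rintro ⟨c, hc, w, hd, hw, hl, rfl⟩
    rw [hg.C_eq, Finset.mem_image] at hc
    obtain ⟨c, hc, rfl⟩ := hc
    rw [hf.E_eq, Finset.mem_image] at hw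
    obtain ⟨⟨b, β, a⟩, he, heq⟩ := hw
    simp only [mapE, mapC, Prod.mk.injEq] at heq hd hl ⊢
    obtain ⟨hb, rfl, rfl⟩ := heq
    obtain ⟨hbK, ha, hba⟩ := hK.1 _ he
    have hbx : b = x₀ := hf.injOn hbK hx₀ hb
    subst hbx
    refine ⟨(c.2.2.2.1, c.2.2.1, a), mem_bridgeOut.2 ⟨c, hc, a, hd, he, ?_, rfl⟩, ?_⟩
    · rw [← hl, hf.lab_eq a ha]
    · simp only [piecewise_eq_right_of_mem hdisj ha (Ne.symm hba),
        Finset.piecewise_eq_of_mem _ _ _ (hR.2 c hc), and_self]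
  · rintro ⟨e, he, rfl⟩
    obtain ⟨c, hc, a, hd, ha, hl, rfl⟩ := mem_bridgeOut.1 he
    obtain ⟨-, haK, hxa⟩ := hK.1 _ ha
    refine ⟨mapC g c, hg.C_eq ▸ Finset.mem_image_of_mem _ hc, f a, hd,
      hf.E_eq ▸ Finset.mem_image_of_mem (mapE f) ha, by rw [hf.lab_eq a haK, hl]; rfl, ?_⟩
    simp only [mapE, mapC, piecewise_eq_right_of_mem hdisj haK (Ne.symm hxa),
      Finset.piecewise_eq_of_mem _ _ _ (hR.2 c hc)]

lemma IsRenaming.substC_eq (hK : WFE K) (hR : WFE R) (hf : IsRenaming f K H)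
    (hg : IsRenaming g R D) (hx₀ : x₀ ∈ K.V) (hdisj : Disjoint (K.V.erase x₀) R.V) :
    substC H (f x₀) D = (substC K x₀ R).image (mapC (R.V.piecewise g f)) := by
  ext c
  rw [mem_substC, Finset.mem_image]
  constructor
  · rintro (⟨hc, hcx⟩ | ⟨a, ha, b, hb, hax, h1, h2, h3, rfl⟩)
    · rw [hf.C_eq, Finset.mem_image] at hc
      obtain ⟨c, hc, rfl⟩ := hc
      have hne : c.2.2.2.1 ≠ x₀ := fun h => hcx (by rw [← h]; rfl)
      refine ⟨c, mem_substC.2 (Or.inl ⟨hc, hne⟩), ?_⟩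
      simp only [mapC, piecewise_eq_right_of_mem hdisj (hK.2 c hc) hne]
    · rw [hf.C_eq, Finset.mem_image] at ha
      obtain ⟨a, ha, rfl⟩ := ha
      rw [hg.C_eq, Finset.mem_image] at hb
      obtain ⟨b, hb, rfl⟩ := hb
      have hax' : a.2.2.2.1 = x₀ := hf.injOn (hK.2 a ha) hx₀ hax
      refine ⟨(a.1, a.2.1, b.2.2.1, b.2.2.2.1, a.2.2.2.2),
        mem_substC.2 (Or.inr ⟨a, ha, b, hb, hax', h1, h2, h3, rfl⟩), ?_⟩
      simp only [mapC, Finset.piecewise_eq_of_mem _ _ _ (hR.2 b hb)]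
  · rintro ⟨c, hc, rfl⟩
    rcases mem_substC.1 hc with ⟨hc, hne⟩ | ⟨a, ha, b, hb, rfl, h1, h2, h3, rfl⟩
    · have hmap : mapC (R.V.piecewise g f) c = mapC f c := by
        simp only [mapC, piecewise_eq_right_of_mem hdisj (hK.2 c hc) hne]
      rw [hmap]
      exact Or.inl ⟨hf.C_eq ▸ Finset.mem_image_of_mem _ hc,
        fun h => hne (hf.injOn (hK.2 c hc) hx₀ h)⟩
    · refine Or.inr ⟨mapC f a, hf.C_eq ▸ Finset.mem_image_of_mem _ ha, mapC g b,
        hg.C_eq ▸ Finset.mem_image_of_mem _ hb, rfl, h1, h2, h3, ?_⟩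
      simp only [mapC, Finset.piecewise_eq_of_mem _ _ _ (hR.2 b hb)]

lemma IsRenaming.filter_E_eq (hK : WFE K) (hf : IsRenaming f K H) (hx₀ : x₀ ∈ K.V)
    (hdisj : Disjoint (K.V.erase x₀) R.V) :
    H.E.filter (fun e => e.1 ≠ f x₀ ∧ e.2.2 ≠ f x₀) =
      (K.E.filter (fun e => e.1 ≠ x₀ ∧ e.2.2 ≠ x₀)).image (mapE (R.V.piecewise g f)) := by
  have hinj : ∀ {y}, y ∈ K.V → (f y ≠ f x₀ ↔ y ≠ x₀) :=
    fun hy => not_congr ⟨fun h => hf.injOn hy hx₀ h, fun h => h ▸ rfl⟩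
  rw [hf.E_eq, Finset.filter_image]
  refine (congrArg _ (Finset.filter_congr fun e he => ?_)).trans (Finset.image_congr fun e he => ?_)
  · exact and_congr (hinj (hK.1 e he).1) (hinj (hK.1 e he).2.1)
  · obtain ⟨he, h1, h2⟩ := Finset.mem_filter.1 he
    simp only [mapE, piecewise_eq_right_of_mem hdisj (hK.1 e he).1 h1,
      piecewise_eq_right_of_mem hdisj (hK.1 e he).2.1 h2]

lemma IsRenaming.subst (hK : WFE K) (hR : WFE R) (hf : IsRenaming f K H)
    (hg : IsRenaming g R D) (hx₀ : x₀ ∈ K.V) (hdisj : Disjoint (K.V.erase x₀) R.V)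
    (hfresh : ∀ y ∈ D.V, y ∉ H.V) :
    IsRenaming (R.V.piecewise g f) (subst K x₀ R) (subst H (f x₀) D) := by
  have hKf : ∀ x ∈ K.V.erase x₀, R.V.piecewise g f x = f x := fun x hx =>
    piecewise_eq_right_of_mem hdisj (Finset.mem_of_mem_erase hx) (Finset.ne_of_mem_erase hx)
  have hRg : ∀ x ∈ R.V, R.V.piecewise g f x = g x := fun x hx =>
    Finset.piecewise_eq_of_mem _ _ _ hx
  have hfD : ∀ x ∈ K.V, f x ∉ D.V := fun x hx hD => hfresh _ hD (hf.mem_V hx)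
  refine ⟨?_, ?_, ?_, hf.substC_eq hK hR hg hx₀ hdisj, ?_⟩
  · rintro x hx y hy hxy
    simp only [_root_.subst, Finset.coe_union, Set.mem_union, Finset.mem_coe] at hx hy
    rcases hx with hx | hx <;> rcases hy with hy | hy
    · rw [hKf x hx, hKf y hy] at hxy
      exact hf.injOn (Finset.mem_of_mem_erase hx) (Finset.mem_of_mem_erase hy) hxy
    · rw [hKf x hx, hRg y hy] at hxy
      exact absurd (hxy ▸ hg.mem_V hy) (hfD x (Finset.mem_of_mem_erase hx))
    · rw [hRg x hx, hKf y hy] at hxy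
      exact absurd (hxy ▸ hg.mem_V hx) (hfD y (Finset.mem_of_mem_erase hy))
    · rw [hRg x hx, hRg y hy] at hxy
      exact hg.injOn hx hy hxy
  · simp only [_root_.subst]
    rw [Finset.image_union, Finset.image_congr hKf, Finset.image_congr hRg, ← hg.V_eq,
      Finset.erase_eq, Finset.erase_eq, Finset.image_sdiff_of_injOn hf.injOn
        (Finset.singleton_subset_iff.2 hx₀), Finset.image_singleton, hf.V_eq]
  · have hRE : R.E.image (mapE g) = R.E.image (mapE (R.V.piecewise g f)) :=
      Finset.image_congr fun e he => by
        simp only [mapE, hRg _ (hR.1 e he).1, hRg _ (hR.1 e he).2.1]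
    simp only [_root_.subst]
    rw [Finset.image_union, Finset.image_union, Finset.image_union,
      hf.filter_E_eq hK hx₀ hdisj, hf.bridgeIn_eq hK hR hg hx₀ hdisj,
      hf.bridgeOut_eq hK hR hg hx₀ hdisj, hg.E_eq, hRE]
  · intro x hx
    simp only [_root_.subst, Finset.mem_union] at hx ⊢
    by_cases hxR : x ∈ R.V
    · rw [hRg x hxR, if_pos (hg.mem_V hxR), if_pos hxR, hg.lab_eq x hxR]
    · have hxK := hx.resolve_right hxR
      rw [hKf x hxK, if_neg (hfD x (Finset.mem_of_mem_erase hxK)), if_neg hxR,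
        hf.lab_eq x (Finset.mem_of_mem_erase hxK)]

end Naturality

def IsSubstitution (K : ExtGraph) (x₀ : ℕ) (R K' : ExtGraph) : Prop :=
  ∃ σ Rc, IsRenaming σ R Rc ∧ Disjoint (K.V.erase x₀) Rc.V ∧ ∃ φ, IsRenaming φ K' (subst K x₀ Rc)

lemma IsSubstitution.renaming {f g : ℕ → ℕ} {K R K' H D : ExtGraph} {x₀ : ℕ}
    (hsub : IsSubstitution K x₀ R K') (hK : WFE K) (hR : WFE R) (hf : IsRenaming f K H)
    (hg : IsRenaming g R D) (hx₀ : x₀ ∈ K.V) (hfresh : ∀ y ∈ D.V, y ∉ H.V) :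
    ∃ h, IsRenaming h K' (subst H (f x₀) D) := by
  obtain ⟨σ, Rc, hσ, hdisj, φ, hφ⟩ := hsub
  exact ⟨_, hφ.comp (hf.subst hK (hσ.wfe hR) ((hσ.symm hR).comp hg) hx₀ hdisj hfresh)⟩

lemma DerStepAt.exists_renaming {G : Grammar} {p : G.ι} {f : ℕ → ℕ} {K K' H H' : ExtGraph}
    {x₀ : ℕ} (hstep : DerStepAt G (f x₀) p H H') (hsub : IsSubstitution K x₀ (G.rhs p) K')
    (hK : WFE K) (hR : WFE (G.rhs p)) (hf : IsRenaming f K H) (hx₀ : x₀ ∈ K.V) :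
    ∃ h, IsRenaming h K' H' := by
  obtain ⟨-, -, D, hD, hiso, hfresh, rfl⟩ := hstep
  obtain ⟨g, hg⟩ := hiso.isRenaming hD hR
  exact hsub.renaming hK hR hf (hg.symm hD) hx₀ hfresh

lemma exists_derStepAt {G : Grammar} {p : G.ι} {f : ℕ → ℕ} {K K' H : ExtGraph} {x₀ : ℕ}
    (hsub : IsSubstitution K x₀ (G.rhs p) K') (hK : WFE K) (hR : WFE (G.rhs p))
    (hf : IsRenaming f K H) (hx₀ : x₀ ∈ K.V) (hlab : K.lab x₀ = VLab.nt (G.lhs p)) :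
    ∃ H', DerStepAt G (f x₀) p H H' ∧ ∃ h, IsRenaming h K' H' := by
  obtain ⟨g, D, hg, hfresh⟩ := exists_fresh_renaming (G.rhs p) H.V
  refine ⟨subst H (f x₀) D, ⟨hf.mem_V hx₀, by rw [hf.lab_eq x₀ hx₀, hlab], D, hg.wfe hR,
    (hg.symm hR).extIso (hg.wfe hR), hfresh, rfl⟩, hsub.renaming hK hR hf hg hx₀ hfresh⟩

lemma mem_sSn_V {n x : ℕ} : x ∈ (sSn n).V ↔ x < 3 * n + 2 := by
  simp only [sSn, Finset.mem_union, Finset.mem_insert, Finset.mem_singleton,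
    Finset.mem_image, Finset.mem_range]
  constructor
  · rintro (((h | ⟨i, hi, rfl⟩) | ⟨i, hi, rfl⟩) | ⟨i, hi, rfl⟩) <;> omega
  · intro h
    obtain h | h | h | h : x < 2 ∨ 2 ≤ x ∧ (x - 2) % 3 = 0 ∨ 2 ≤ x ∧ (x - 2) % 3 = 1 ∨
        2 ≤ x ∧ (x - 2) % 3 = 2 := by omega
    · exact Or.inl (Or.inl (Or.inl (by omega)))
    · exact Or.inl (Or.inl (Or.inr ⟨(x - 2) / 3, by omega, by omega⟩))
    · exact Or.inl (Or.inr ⟨(x - 2) / 3, by omega, by omega⟩)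
    · exact Or.inr ⟨(x - 2) / 3, by omega, by omega⟩

lemma sSn_E_succ (n : ℕ) : (sSn (n + 1)).E = (sSn n).E ∪
    {(0, ELab.plain 0, 4 + 3 * n), (4 + 3 * n, ELab.plain 0, 2 + 3 * n),
      (2 + 3 * n, ELab.plain 0, 3 + 3 * n)} := by
  ext e
  simp only [sSn, Finset.range_add_one, Finset.image_insert, Finset.mem_union, Finset.mem_insert,
    Finset.mem_singleton]
  tauto

lemma sSn_E_wf {n : ℕ} {e : ℕ × ELab × ℕ} (he : e ∈ (sSn n).E) :
    e.1 < 3 * n + 2 ∧ e.2.2 < 3 * n + 2 ∧ e.1 ≠ e.2.2 := by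
  simp only [sSn, Finset.mem_union, Finset.mem_singleton, Finset.mem_image, Finset.mem_range] at he
  rcases he with ((rfl | ⟨i, hi, rfl⟩) | ⟨i, hi, rfl⟩) | ⟨i, hi, rfl⟩ <;> dsimp only <;> omega

lemma sSn_lab_node (n i : ℕ) : (sSn n).lab (2 + 3 * i) = VLab.node 0 := by
  simp only [sSn, if_neg (show 2 + 3 * i ≠ 0 by omega), if_neg (show 2 + 3 * i ≠ 1 by omega),
    if_pos (show (2 + 3 * i - 2) % 3 = 0 by omega)]

lemma sSn_lab_pendant (n i : ℕ) : (sSn n).lab (3 + 3 * i) = VLab.wire 0 := by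
  simp only [sSn, if_neg (show 3 + 3 * i ≠ 0 by omega), if_neg (show 3 + 3 * i ≠ 1 by omega),
    if_neg (show (3 + 3 * i - 2) % 3 ≠ 0 by omega)]

lemma sSn_lab_wire (n i : ℕ) : (sSn n).lab (4 + 3 * i) = VLab.wire 0 := by
  simp only [sSn, if_neg (show 4 + 3 * i ≠ 0 by omega), if_neg (show 4 + 3 * i ≠ 1 by omega),
    if_neg (show (4 + 3 * i - 2) % 3 ≠ 0 by omega)]

def starGraph (n : ℕ) : ExtGraph := ⟨sSn n, ∅⟩

/-- `sS_n` with a pending nonterminal `X` at `2 + 3n`, attached to the centre. -/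
def openStar (n : ℕ) : ExtGraph :=
  ⟨⟨Finset.range (3 * n + 3), insert (0, ELab.plain 0, 2 + 3 * n) (sSn n).E,
    fun x => if x = 2 + 3 * n then VLab.nt 1 else (sSn n).lab x⟩, ∅⟩

/-- Where the vertices `w, u, pw, X = 0, 1, 2, 3` of the `X`-productions go when they add
the spoke number `n` to the star. -/
def spokeSlot (n x : ℕ) : ℕ :=
  if x = 0 then 4 + 3 * n else if x = 1 then 2 + 3 * n else if x = 2 then 3 + 3 * n else 5 + 3 * n

def spokeUnslot (n y : ℕ) : ℕ :=
  if y = 4 + 3 * n then 0 else if y = 2 + 3 * n then 1 else if y = 3 + 3 * n then 2 else 3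

lemma spokeUnslot_spokeSlot (n : ℕ) {x : ℕ} (hx : x ≤ 3) : spokeUnslot n (spokeSlot n x) = x := by
  unfold spokeSlot spokeUnslot; split_ifs <;> omega

lemma openStar_E_filter (n : ℕ) :
    (openStar n).E.filter (fun e => e.1 ≠ 2 + 3 * n ∧ e.2.2 ≠ 2 + 3 * n) = (sSn n).E := by
  ext e
  simp only [openStar, Finset.mem_filter, Finset.mem_insert]
  constructor
  · rintro ⟨rfl | he, -, hne⟩
    · exact absurd rfl hne
    · exact he
  · intro he
    have := sSn_E_wf he
    exact ⟨Or.inr he, by omega, by omega⟩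

lemma openStar_lab_zero (n : ℕ) : (openStar n).lab 0 = VLab.node 0 :=
  if_neg (show 0 ≠ 2 + 3 * n by omega)

lemma openStar_nt_mem (n : ℕ) : 2 + 3 * n ∈ (openStar n).V := Finset.mem_range.2 (by omega)

lemma openStar_lab_nt (n : ℕ) : (openStar n).lab (2 + 3 * n) = VLab.nt 1 := if_pos rfl

lemma bridgeIn_openStar (n : ℕ) (R : ExtGraph) : bridgeIn (openStar n) (2 + 3 * n) R =
    (R.C.filter (fun c => c.2.2.2.2 = true ∧ c.2.1 = ELab.plain 0 ∧ c.1 = VLab.node 0)).image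
      (fun c => (0, c.2.2.1, c.2.2.2.1)) := by
  ext e
  simp only [mem_bridgeIn, Finset.mem_image, Finset.mem_filter]
  constructor
  · rintro ⟨c, hc, w, hd, hw, hl, rfl⟩
    obtain ⟨rfl, hβ⟩ : w = 0 ∧ c.2.1 = ELab.plain 0 := by
      rcases Finset.mem_insert.1 hw with h | h
      · simp only [Prod.mk.injEq] at h; exact ⟨h.1, h.2.1⟩
      · have := (sSn_E_wf h).2.1; dsimp only at this; omega
    exact ⟨c, ⟨hc, hd, hβ, hl.symm.trans (openStar_lab_zero n)⟩, rfl⟩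
  · rintro ⟨c, ⟨hc, hd, hβ, hl⟩, rfl⟩
    refine ⟨c, hc, 0, hd, ?_, (openStar_lab_zero n).trans hl.symm, rfl⟩
    rw [hβ]; exact Finset.mem_insert_self _ _

lemma bridgeOut_openStar (n : ℕ) (R : ExtGraph) : bridgeOut (openStar n) (2 + 3 * n) R = ∅ := by
  refine Finset.eq_empty_of_forall_notMem fun e he => ?_
  obtain ⟨c, -, w, -, hw, -⟩ := mem_bridgeOut.1 he
  rcases Finset.mem_insert.1 hw with h | h
  · simp only [Prod.mk.injEq] at h; omega
  · have := sSn_E_wf h; omega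

lemma isSubstitution_rec (n : ℕ) :
    IsSubstitution (openStar n) (2 + 3 * n) SXrec (openStar (n + 1)) := by
  have hslot : ∀ x ∈ SXrec.V, spokeUnslot n (spokeSlot n x) = x := fun x hx =>
    spokeUnslot_spokeSlot n <| by
      simp only [SXrec, Finset.mem_insert, Finset.mem_singleton] at hx; omega
  refine ⟨_, _, isRenaming_rename hslot, ?_, id, IsRenaming.of_eq ?_ ?_ ?_ ?_⟩
  · simp [Finset.disjoint_left, openStar, ExtGraph.rename, SXrec, spokeSlot]
    omega
  · ext x
    simp [openStar, _root_.subst, ExtGraph.rename, SXrec, spokeSlot]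
    omega
  · simp only [_root_.subst, openStar_E_filter, bridgeIn_openStar, bridgeOut_openStar]
    ext e
    have h5 : 2 + 3 * (n + 1) = 5 + 3 * n := by ring
    simp [openStar, ExtGraph.rename, SXrec, spokeSlot, sSn_E_succ, mapE, mapC, h5, or_and_right,
      exists_or, @eq_comm _ (0, ELab.plain 0, _) e]
    tauto
  · simp [_root_.subst, substC, openStar]
  · intro x hx
    have h5 : 2 + 3 * (n + 1) = 5 + 3 * n := by ring
    simp only [openStar, Finset.mem_range] at hx
    obtain hx | rfl | rfl | rfl | rfl : x < 3 * n + 2 ∨ x = 2 + 3 * n ∨ x = 3 + 3 * n ∨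
      x = 4 + 3 * n ∨ x = 5 + 3 * n := by omega
    · simp [_root_.subst, ExtGraph.rename, SXrec, spokeSlot, openStar, h5, sSn,
        show x ≠ 2 + 3 * n by omega, show x ≠ 3 + 3 * n by omega, show x ≠ 4 + 3 * n by omega,
        show x ≠ 5 + 3 * n by omega]
    all_goals simp [_root_.subst, ExtGraph.rename, SXrec, spokeSlot, spokeUnslot, openStar, h5,
      sSn_lab_node, sSn_lab_pendant, sSn_lab_wire]

lemma isSubstitution_term (n : ℕ) :
    IsSubstitution (openStar n) (2 + 3 * n) SXterm (starGraph (n + 1)) := by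
  have hslot : ∀ x ∈ SXterm.V, spokeUnslot n (spokeSlot n x) = x := fun x hx =>
    spokeUnslot_spokeSlot n <| by
      simp only [SXterm, Finset.mem_insert, Finset.mem_singleton] at hx; omega
  refine ⟨_, _, isRenaming_rename hslot, ?_, id, IsRenaming.of_eq ?_ ?_ ?_ ?_⟩
  · simp [Finset.disjoint_left, openStar, ExtGraph.rename, SXterm, spokeSlot]
    omega
  · ext x
    simp [openStar, starGraph, _root_.subst, ExtGraph.rename, SXterm, spokeSlot, mem_sSn_V]
    omega
  · simp only [_root_.subst, openStar_E_filter, bridgeIn_openStar, bridgeOut_openStar]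
    ext e
    simp [starGraph, ExtGraph.rename, SXterm, spokeSlot, sSn_E_succ, mapE, mapC,
      @eq_comm _ (0, ELab.plain 0, _) e]
    tauto
  · simp [_root_.subst, substC, openStar, starGraph]
  · intro x hx
    simp only [starGraph, mem_sSn_V] at hx
    obtain hx | rfl | rfl | rfl : x < 3 * n + 2 ∨ x = 2 + 3 * n ∨ x = 3 + 3 * n ∨
      x = 4 + 3 * n := by omega
    · simp [_root_.subst, ExtGraph.rename, SXterm, spokeSlot, openStar, starGraph, sSn,
        show x ≠ 2 + 3 * n by omega, show x ≠ 3 + 3 * n by omega, show x ≠ 4 + 3 * n by omega]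
    all_goals simp [_root_.subst, ExtGraph.rename, SXterm, spokeSlot, spokeUnslot, starGraph,
      sSn_lab_node, sSn_lab_pendant, sSn_lab_wire]

lemma isSubstitution_init (z : ℕ) : IsSubstitution (sn 0 z) z SDS (openStar 0) := by
  refine ⟨id, SDS, IsRenaming.refl _, by simp [sn], id, IsRenaming.of_eq ?_ ?_ ?_ ?_⟩
  · ext x
    simp [_root_.subst, sn, SDS, openStar]
    omega
  · ext e
    simp [_root_.subst, sn, SDS, openStar, bridgeIn, bridgeOut, sSn]
    tauto
  · simp [_root_.subst, substC, sn, SDS, openStar]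
  · intro x hx
    simp only [openStar, Finset.mem_range] at hx
    interval_cases x <;> simp [_root_.subst, SDS, openStar, sSn]

lemma wfe_sn (s z : ℕ) : WFE (sn s z) := by simp [WFE, sn]

lemma wfe_openStar (n : ℕ) : WFE (openStar n) := by
  refine ⟨fun e he => ?_, by simp [openStar]⟩
  simp only [openStar, Finset.mem_insert, Finset.mem_range] at he ⊢
  rcases he with rfl | he
  · dsimp only; omega
  · have := sSn_E_wf he; omega

lemma wfe_starGraph (n : ℕ) : WFE (starGraph n) := by
  refine ⟨fun e he => ?_, by simp [starGraph]⟩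
  have := sSn_E_wf he
  simp only [starGraph, mem_sSn_V]
  omega

lemma wfe_SGram_rhs (p : Fin 3) : WFE (SGram.rhs p) := by
  fin_cases p <;> unfold WFE <;> decide

lemma sSn_lab_isNT (n x : ℕ) : ((sSn n).lab x).isNT = false := by
  simp only [sSn]; split_ifs <;> rfl

lemma openStar_lab_eq_nt {n x k : ℕ} (h : (openStar n).lab x = VLab.nt k) :
    x = 2 + 3 * n ∧ k = 1 := by
  simp only [openStar] at h
  split_ifs at h with hx
  · exact ⟨hx, (VLab.nt.inj h).symm⟩
  · simpa [h, VLab.isNT] using sSn_lab_isNT n x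

def IsStarForm (H : ExtGraph) : Prop :=
  (∃ z, H = sn 0 z) ∨ (∃ n f, IsRenaming f (openStar n) H) ∨
    ∃ n f, 1 ≤ n ∧ IsRenaming f (starGraph n) H

lemma IsStarForm.derStep {H H' : ExtGraph} (hH : IsStarForm H) (hs : DerStep SGram H H') :
    IsStarForm H' := by
  obtain ⟨v, p, hstep⟩ := hs
  change Fin 3 at p
  rcases hH with ⟨z, rfl⟩ | ⟨n, f, hf⟩ | ⟨n, f, -, hf⟩
  · obtain rfl : v = z := Finset.mem_singleton.1 hstep.1
    have hp : p = 0 := by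
      have := hstep.2.1
      fin_cases p <;> simp_all [sn, SGram]
    subst hp
    exact Or.inr (Or.inl ⟨0, DerStepAt.exists_renaming (f := id) hstep (isSubstitution_init v)
      (wfe_sn 0 v) (wfe_SGram_rhs 0) (IsRenaming.refl _) (Finset.mem_singleton_self v)⟩)
  · obtain ⟨x, hx, rfl⟩ := hf.exists_of_mem_V hstep.1
    obtain ⟨rfl, hp⟩ := openStar_lab_eq_nt ((hf.lab_eq x hx).symm.trans hstep.2.1)
    fin_cases p
    · simp [SGram] at hp
    · exact Or.inr (Or.inl ⟨n + 1, hstep.exists_renaming (isSubstitution_rec n) (wfe_openStar n)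
        (wfe_SGram_rhs 1) hf hx⟩)
    · obtain ⟨h, hh⟩ := hstep.exists_renaming (isSubstitution_term n) (wfe_openStar n)
        (wfe_SGram_rhs 2) hf hx
      exact Or.inr (Or.inr ⟨n + 1, h, by omega, hh⟩)
  · obtain ⟨x, hx, rfl⟩ := hf.exists_of_mem_V hstep.1
    have hlab : (sSn n).lab x = _ := (hf.lab_eq x hx).symm.trans hstep.2.1
    simpa [hlab, VLab.isNT] using sSn_lab_isNT n x

lemma IsStarForm.of_terminal {H : ExtGraph} (hH : IsStarForm H) (hT : Terminal H) :
    ∃ n f, 1 ≤ n ∧ IsRenaming f (starGraph n) H := by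
  rcases hH with ⟨z, rfl⟩ | ⟨n, f, hf⟩ | h
  · simpa [sn, VLab.isNT] using hT z (Finset.mem_singleton_self z)
  · have := hT _ (hf.mem_V (openStar_nt_mem n))
    simp [hf.lab_eq _ (openStar_nt_mem n), openStar_lab_nt, VLab.isNT] at this
  · exact h

lemma IsStarForm.of_derivation {z : ℕ} {H : ExtGraph}
    (h : Relation.ReflTransGen (DerStep SGram) (sn 0 z) H) : IsStarForm H := by
  induction h with
  | refl => exact Or.inl ⟨z, rfl⟩
  | tail _ hs ih => exact ih.derStep hs

lemma IsRenaming.terminal_of_starGraph {n : ℕ} {f : ℕ → ℕ} {H : ExtGraph}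
    (hf : IsRenaming f (starGraph n) H) : Terminal H := by
  intro v hv
  obtain ⟨x, hx, rfl⟩ := hf.exists_of_mem_V hv
  rw [hf.lab_eq x hx]
  exact sSn_lab_isNT n x

lemma exists_derivation_openStar (n : ℕ) : ∃ H f,
    Relation.ReflTransGen (DerStep SGram) (sn 0 0) H ∧ IsRenaming f (openStar n) H := by
  induction n with
  | zero =>
    obtain ⟨H, hstep, h, hh⟩ := exists_derStepAt (G := SGram) (p := (0 : Fin 3)) (f := id)
      (isSubstitution_init 0) (wfe_sn 0 0) (wfe_SGram_rhs 0) (IsRenaming.refl _)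
      (Finset.mem_singleton_self 0) rfl
    exact ⟨H, h, .single ⟨_, _, hstep⟩, hh⟩
  | succ n ih =>
    obtain ⟨H, f, hder, hf⟩ := ih
    obtain ⟨H', hstep, h, hh⟩ := exists_derStepAt (G := SGram) (p := (1 : Fin 3))
      (isSubstitution_rec n) (wfe_openStar n) (wfe_SGram_rhs 1) hf (openStar_nt_mem n)
      (openStar_lab_nt n)
    exact ⟨H', h, hder.tail ⟨_, _, hstep⟩, hh⟩

lemma exists_derivation_starGraph (n : ℕ) : ∃ H f,
    Relation.ReflTransGen (DerStep SGram) (sn 0 0) H ∧ IsRenaming f (starGraph (n + 1)) H := by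
  obtain ⟨H, f, hder, hf⟩ := exists_derivation_openStar n
  obtain ⟨H', hstep, h, hh⟩ := exists_derStepAt (G := SGram) (p := (2 : Fin 3))
    (isSubstitution_term n) (wfe_openStar n) (wfe_SGram_rhs 2) hf (openStar_nt_mem n)
    (openStar_lab_nt n)
  exact ⟨H', h, hder.tail ⟨_, _, hstep⟩, hh⟩

/-- The language of the star grammar is exactly the family
{sS_n : n ≥ 1} of star string graphs, up to isomorphism. -/
theorem star_grammar_language :
    (∀ H : ExtGraph,
      (∃ z, Relation.ReflTransGen (DerStep SGram) (sn 0 z) H) → Terminal H →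
      ∃ n, 1 ≤ n ∧ GIso H.toLGraph (sSn n)) ∧
    (∀ n, 1 ≤ n → ∃ H : ExtGraph,
      (∃ z, Relation.ReflTransGen (DerStep SGram) (sn 0 z) H) ∧ Terminal H ∧
      GIso H.toLGraph (sSn n)) := by
  constructor
  · rintro H ⟨z, hder⟩ hT
    obtain ⟨n, f, hn, hf⟩ := (IsStarForm.of_derivation hder).of_terminal hT
    exact ⟨n, hn, hf.gIso (wfe_starGraph n)⟩
  · intro n hn
    obtain ⟨m, rfl⟩ := Nat.exists_eq_add_of_le' hn
    obtain ⟨H, f, hder, hf⟩ := exists_derivation_starGraph m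
    exact ⟨H, ⟨0, hder⟩, hf.terminal_of_starGraph, hf.gIso (wfe_starGraph (m + 1))⟩
end

section
/- If G is a boundary edNCE (B-edNCE) grammar, then every sentential form of G contains no edges between nonterminal vertices and no connection instructions whose first component is a nonterminal label; in particular the boundary property is preserved under derivation steps. -/
/-- A boundary (B-edNCE) grammar: no production right-hand side has an edge
between nonterminal vertices, and no connection instruction refers to a
nonterminal vertex label. -/
def Boundary (G : Grammar) : Prop :=
  ∀ p : G.ι,
    (∀ e ∈ (G.rhs p).E,
      ¬(((G.rhs p).lab e.1).isNT = true ∧ ((G.rhs p).lab e.2.2).isNT = true)) ∧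
    (∀ c ∈ (G.rhs p).C, c.1.isNT = false)

/-- A sentential form of a grammar. -/
def Sentential (G : Grammar) (H : ExtGraph) : Prop :=
  ∃ z, Relation.ReflTransGen (DerStep G) (sn G.S z) H

/-!
Along a derivation we carry, besides the boundary property, the fact that every edge has
both endpoints among the vertices: the label of a vertex of `subst H v D` is read off `H`
only for vertices of `H`, since the copy `D` is fresh for `H` alone. In a step, the edges of `H`
that survive and the edges of the boundary copy `D` keep their labels, while a bridge edge joins
`D` to a neighbour `w` of `v` whose label is the first component of a connection instruction
of `D`, hence terminal. The same remark shows `w ≠ v`, so the endpoints stay inside the new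
vertex set. Connection instructions of the result take their first component from those of `H`.
-/

namespace ExtGraph

def EndpointsMem (H : ExtGraph) : Prop := ∀ e ∈ H.E, e.1 ∈ H.V ∧ e.2.2 ∈ H.V

def IsBoundary (H : ExtGraph) : Prop :=
  (∀ e ∈ H.E, ¬((H.lab e.1).isNT = true ∧ (H.lab e.2.2).isNT = true)) ∧
  (∀ c ∈ H.C, c.1.isNT = false)

theorem endpointsMem_sn (s z : ℕ) : (sn s z).EndpointsMem := by
  simp [EndpointsMem, sn]

theorem isBoundary_sn (s z : ℕ) : (sn s z).IsBoundary := by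
  simp [IsBoundary, sn]

theorem IsBoundary.of_extIso {D K : ExtGraph} (hD : WFE D) (hDK : ExtIso D K)
    (hK : K.IsBoundary) : D.IsBoundary := by
  obtain ⟨f, -, hlab, hE, hC⟩ := hDK
  refine ⟨fun e he => ?_, fun ⟨σ, β, γ, x, d⟩ hc => ?_⟩
  · obtain ⟨h1, h2, -⟩ := hD.1 e he
    simpa [hlab e.1 h1, hlab e.2.2 h2] using hK.1 _ ((hE e.1 e.2.1 e.2.2 h1 h2).mp he)
  · exact hK.2 (σ, β, γ, f x, d) ((hC σ β γ x d (hD.2 _ hc)).mp hc)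

end ExtGraph

open ExtGraph

section Subst

variable {H D : ExtGraph} {v : ℕ}

theorem exists_of_mem_bridgeIn {e : ℕ × ELab × ℕ} (he : e ∈ bridgeIn H v D) :
    ∃ β, (H.lab e.1, β, e.2.1, e.2.2, true) ∈ D.C ∧ (e.1, β, v) ∈ H.E := by
  simp only [bridgeIn, Finset.mem_image, Finset.mem_filter, Finset.mem_product] at he
  obtain ⟨⟨⟨σ, β, γ, x, d⟩, ⟨w, β', t⟩⟩, ⟨⟨hc, hwt⟩, hd, ht, hβ, hσ⟩, rfl⟩ := he
  dsimp only at hd ht hβ hσ ⊢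
  subst hd ht hβ hσ
  exact ⟨β', hc, hwt⟩

theorem exists_of_mem_bridgeOut {e : ℕ × ELab × ℕ} (he : e ∈ bridgeOut H v D) :
    ∃ β, (H.lab e.2.2, β, e.2.1, e.1, false) ∈ D.C ∧ (v, β, e.2.2) ∈ H.E := by
  simp only [bridgeOut, Finset.mem_image, Finset.mem_filter, Finset.mem_product] at he
  obtain ⟨⟨⟨σ, β, γ, x, d⟩, ⟨t, β', w⟩⟩, ⟨⟨hc, htw⟩, hd, ht, hβ, hσ⟩, rfl⟩ := he
  dsimp only at hd ht hβ hσ ⊢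
  subst hd ht hβ hσ
  exact ⟨β', hc, htw⟩

theorem exists_fst_eq_of_mem_substC {c : VLab × ELab × ELab × ℕ × Bool}
    (hc : c ∈ substC H v D) : ∃ c' ∈ H.C, c'.1 = c.1 := by
  simp only [substC, Finset.mem_union, Finset.mem_filter, Finset.mem_image,
    Finset.mem_product] at hc
  rcases hc with ⟨hc, -⟩ | ⟨⟨cH, cD⟩, ⟨⟨hcH, -⟩, -⟩, rfl⟩
  exacts [⟨c, hc, rfl⟩, ⟨cH, hcH, rfl⟩]

theorem mem_subst_E {e : ℕ × ELab × ℕ} :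
    e ∈ (subst H v D).E ↔ (e ∈ H.E ∧ e.1 ≠ v ∧ e.2.2 ≠ v) ∨ e ∈ D.E ∨
      e ∈ bridgeIn H v D ∨ e ∈ bridgeOut H v D := by
  simp only [subst, Finset.mem_union, Finset.mem_filter]
  tauto

theorem subst_lab_of_mem_left (hfresh : ∀ x ∈ D.V, x ∉ H.V) {x : ℕ} (hx : x ∈ H.V) :
    (subst H v D).lab x = H.lab x :=
  if_neg fun hxD => hfresh x hxD hx

theorem subst_lab_of_mem_right {x : ℕ} (hx : x ∈ D.V) : (subst H v D).lab x = D.lab x :=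
  if_pos hx

theorem ne_of_isBoundary_of_isNT (hDB : D.IsBoundary) (hv : (H.lab v).isNT = true)
    {w : ℕ} {σ : VLab} {β γ : ELab} {x : ℕ} {d : Bool} (hc : (σ, β, γ, x, d) ∈ D.C)
    (hw : H.lab w = σ) : w ≠ v := by
  rintro rfl
  simp [hw, hDB.2 _ hc] at hv

theorem endpointsMem_subst (hH : H.EndpointsMem) (hv : (H.lab v).isNT = true)
    (hD : WFE D) (hDB : D.IsBoundary) : (subst H v D).EndpointsMem := by
  have mem_left : ∀ {x}, x ∈ H.V → x ≠ v → x ∈ (subst H v D).V := fun hx hxv =>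
    Finset.mem_union_left _ (Finset.mem_erase.mpr ⟨hxv, hx⟩)
  have mem_right : ∀ {x}, x ∈ D.V → x ∈ (subst H v D).V := fun hx =>
    Finset.mem_union_right _ hx
  intro e he
  rcases mem_subst_E.mp he with ⟨he, h1, h2⟩ | he | he | he
  · exact ⟨mem_left (hH e he).1 h1, mem_left (hH e he).2 h2⟩
  · exact ⟨mem_right (hD.1 e he).1, mem_right (hD.1 e he).2.1⟩
  · obtain ⟨β, hc, hwv⟩ := exists_of_mem_bridgeIn he
    exact ⟨mem_left (hH _ hwv).1 (ne_of_isBoundary_of_isNT hDB hv hc rfl),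
      mem_right (hD.2 _ hc)⟩
  · obtain ⟨β, hc, hvw⟩ := exists_of_mem_bridgeOut he
    exact ⟨mem_right (hD.2 _ hc),
      mem_left (hH _ hvw).2 (ne_of_isBoundary_of_isNT hDB hv hc rfl)⟩

theorem isBoundary_subst (hH : H.EndpointsMem) (hHB : H.IsBoundary)
    (hfresh : ∀ x ∈ D.V, x ∉ H.V) (hD : WFE D) (hDB : D.IsBoundary) :
    (subst H v D).IsBoundary := by
  have lab_left : ∀ {x}, x ∈ H.V → (subst H v D).lab x = H.lab x :=
    subst_lab_of_mem_left hfresh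
  refine ⟨fun e he => ?_, fun c hc => ?_⟩
  · rcases mem_subst_E.mp he with ⟨he, -, -⟩ | he | he | he
    · rw [lab_left (hH e he).1, lab_left (hH e he).2]
      exact hHB.1 e he
    · rw [subst_lab_of_mem_right (hD.1 e he).1, subst_lab_of_mem_right (hD.1 e he).2.1]
      exact hDB.1 e he
    · obtain ⟨β, hc, hwv⟩ := exists_of_mem_bridgeIn he
      rw [lab_left (hH _ hwv).1, hDB.2 _ hc]
      simp
    · obtain ⟨β, hc, hvw⟩ := exists_of_mem_bridgeOut he
      rw [lab_left (hH _ hvw).2, hDB.2 _ hc]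
      simp
  · obtain ⟨c', hc', hfst⟩ := exists_fst_eq_of_mem_substC hc
    exact hfst ▸ hHB.2 c' hc'

end Subst

theorem DerStep.endpointsMem_isBoundary {G : Grammar} (hG : Boundary G) {H H' : ExtGraph}
    (hstep : DerStep G H H') (hH : H.EndpointsMem) (hHB : H.IsBoundary) :
    H'.EndpointsMem ∧ H'.IsBoundary := by
  obtain ⟨v, p, -, hv, D, hD, hDp, hfresh, rfl⟩ := hstep
  have hDB : D.IsBoundary := IsBoundary.of_extIso hD hDp (hG p)
  exact ⟨endpointsMem_subst hH (by simp [hv, VLab.isNT]) hD hDB,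
    isBoundary_subst hH hHB hfresh hD hDB⟩

/-- In a B-edNCE grammar, every sentential form contains no edges
between nonterminal vertices and no connection instruction whose first component
is a nonterminal label: the boundary property is preserved under derivation. -/
theorem boundary_preserved (G : Grammar) (hB : Boundary G)
    (H : ExtGraph) (hS : Sentential G H) :
    (∀ e ∈ H.E, ¬((H.lab e.1).isNT = true ∧ (H.lab e.2.2).isNT = true)) ∧
    (∀ c ∈ H.C, c.1.isNT = false) := by
  obtain ⟨z, hder⟩ := hS
  suffices H.EndpointsMem ∧ H.IsBoundary from this.2
  induction hder with
  | refl => exact ⟨endpointsMem_sn _ _, isBoundary_sn _ _⟩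
  | tail _ hstep ih => exact hstep.endpointsMem_isBoundary hB ih.1 ih.2
end
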